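/- arXiv:1206.5508 — 3 statements merged into one kernel-verified Lean document; each statement's English description precedes it below -/
import Mathlib

section
/- Let X be a symmetric matrix and U, W real matrices of compatible dimensions. Then X + U V W + W^T V^T U^T is negative definite for every matrix V satisfying V^T V ≤ I if and only if there exists a scalar ε > 0 such that X + ε U U^T + ε^{-1} W^T W is negative definite. -/
/-!
Testing the left-hand side with the rank-one contraction `V = u wᵀ / (‖u‖ ‖w‖)`, where
`u = Uᵀ x` and `w = W x`, gives `xᵀ X x + 2 ‖Uᵀ x‖ ‖W x‖ < 0` for all `x ≠ 0`, so each single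
`x` admits an `ε`; conversely `2 uᵀ V w ≤ ε ‖u‖² + ε⁻¹ ‖w‖²` gives the easy direction.
The content is that one `ε` serves all `x`. Write `F ε = ε² UUᵀ + ε X + WᵀW` and
`G ε = ∂F/∂ε`; the discriminant condition makes `F ε x < 0` wherever `G ε x = 0`.
If no `ε > 0` worked, compactness of the unit sphere and connectedness of `(0, ∞)` would give
an `ε` and unit vectors `x`, `y` with `F ε ≥ 0` at both and `G ε x ≤ 0 ≤ G ε y`. Then `G ε`
vanishes somewhere on the segments from `x` and from `-x` to `y`, and the two resulting
negative values of `F ε` force the polar form of `F ε` at `(x, y)` to be both negative and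
positive.
-/

open Matrix Set

lemma sq_mul_add_mul_add_neg_of_two_mul_mul_add_eq_zero {a b c ε : ℝ} (hε : 0 < ε) (hc : c < 0)
    (hdisc : 4 * a * b < c ^ 2) (h : 2 * ε * a + c = 0) : ε ^ 2 * a + ε * c + b < 0 := by
  have ha : 0 < a := by nlinarith
  nlinarith

lemma neg_and_four_mul_mul_lt_sq {a b c : ℝ} (hab : 0 ≤ a * b) (h : c + 2 * √(a * b) < 0) :
    c < 0 ∧ 4 * a * b < c ^ 2 := by
  have hsq := Real.sq_sqrt hab
  have := Real.sqrt_nonneg (a * b)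
  constructor <;> nlinarith

lemma exists_pos_two_mul_mul_add_neg {γ M : ℝ} (hγ : 0 < γ) (hM : 0 < M) :
    ∃ ε > 0, ∀ a c, a ≤ M → c ≤ -γ → 2 * ε * a + c < 0 := by
  refine ⟨γ / (4 * M), by positivity, fun a c ha hc => ?_⟩
  have : γ / (4 * M) * a ≤ γ / 4 :=
    calc γ / (4 * M) * a ≤ γ / (4 * M) * M := by gcongr
      _ = γ / 4 := by field_simp
  linarith

lemma exists_pos_sq_mul_add_mul_add_neg {γ M : ℝ} (hγ : 0 < γ) (hM : 0 < M) :
    ∃ ε > 0, ∀ a b c, b ≤ M → c ≤ -γ → 2 * ε * a + c ≤ 0 → ε ^ 2 * a + ε * c + b < 0 := by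
  refine ⟨4 * M / γ, by positivity, fun a b c hb hc h => ?_⟩
  have hε : 0 ≤ 4 * M / γ := by positivity
  have hεγ : 4 * M / γ * γ = 4 * M := by field_simp
  nlinarith [mul_nonpos_of_nonneg_of_nonpos hε h, mul_le_mul_of_nonneg_left hc hε]

theorem isClosed_setOf_exists_mem_of_isCompact {X Y : Type*} [TopologicalSpace X]
    [TopologicalSpace Y] {K : Set Y} (hK : IsCompact K) {p : X → Y → Prop}
    (hp : IsClosed {z : X × Y | p z.1 z.2}) : IsClosed {x | ∃ y ∈ K, p x y} := by
  have : CompactSpace K := isCompact_iff_compactSpace.mp hK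
  have hclosed : IsClosed {z : X × K | p z.1 z.2} :=
    hp.preimage (continuous_fst.prodMk (continuous_subtype_val.comp continuous_snd))
  convert isClosedMap_fst_of_compactSpace _ hclosed using 1
  ext x
  simp

/-- The `ε > 0` at which `F ε` fails to be negative on `K` would split into the closed sets where
a witness has `G ε ≤ 0`, resp. `G ε ≥ 0`, contradicting the connectedness of `(0, ∞)`. -/
theorem exists_pos_forall_mem_neg_of_isCompact {Y : Type*} [TopologicalSpace Y] {K : Set Y}
    (hK : IsCompact K) {F G : ℝ → Y → ℝ} (hF : Continuous fun z : ℝ × Y => F z.1 z.2)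
    (hG : Continuous fun z : ℝ × Y => G z.1 z.2)
    (hFG : ∀ ε > 0, ∀ x ∈ K, ∀ y ∈ K, 0 ≤ F ε x → 0 ≤ F ε y → G ε x ≤ 0 → 0 ≤ G ε y → False)
    (hsmall : ∃ ε > 0, ∀ v ∈ K, G ε v < 0) (hlarge : ∃ ε > 0, ∀ v ∈ K, G ε v ≤ 0 → F ε v < 0) :
    ∃ ε > 0, ∀ v ∈ K, F ε v < 0 := by
  set L := {ε | ∃ v ∈ K, 0 ≤ F ε v ∧ G ε v ≤ 0}
  set R := {ε | ∃ v ∈ K, 0 ≤ F ε v ∧ 0 ≤ G ε v}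
  have hL : IsClosed L := isClosed_setOf_exists_mem_of_isCompact hK
    ((isClosed_le continuous_const hF).inter (isClosed_le hG continuous_const))
  have hR : IsClosed R := isClosed_setOf_exists_mem_of_isCompact hK
    ((isClosed_le continuous_const hF).inter (isClosed_le continuous_const hG))
  by_contra! hcon
  have hcover : Ioi 0 ⊆ L ∪ R := fun ε hε => by
    obtain ⟨v, hv, hFv⟩ := hcon ε hε
    rcases le_total (G ε v) 0 with hGv | hGv
    exacts [.inl ⟨v, hv, hFv, hGv⟩, .inr ⟨v, hv, hFv, hGv⟩]
  obtain ⟨ε₁, hε₁, hG₁⟩ := hsmall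
  obtain ⟨ε₂, hε₂, hF₂⟩ := hlarge
  have hε₁L : ε₁ ∈ Ioi 0 ∩ L := by
    refine ⟨hε₁, (hcover hε₁).resolve_right ?_⟩
    rintro ⟨v, hv, -, hGv⟩
    exact (hG₁ v hv).not_ge hGv
  have hε₂R : ε₂ ∈ Ioi 0 ∩ R := by
    refine ⟨hε₂, (hcover hε₂).resolve_left ?_⟩
    rintro ⟨v, hv, hFv, hGv⟩
    exact (hF₂ v hv hGv).not_ge hFv
  obtain ⟨ε, hε, ⟨x, hx, hFx, hGx⟩, ⟨y, hy, hFy, hGy⟩⟩ :=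
    isPreconnected_closed_iff.mp isPreconnected_Ioi L R hL hR hcover ⟨ε₁, hε₁L⟩ ⟨ε₂, hε₂R⟩
  exact hFG ε hε x hx y hy hFx hFy hGx hGy

namespace QuadraticMap

section

variable {E : Type*} [AddCommGroup E] [Module ℝ E]

lemma map_smul_add_smul (Q : QuadraticForm ℝ E) (s t : ℝ) (x y : E) :
    Q (s • x + t • y) = s ^ 2 * Q x + t ^ 2 * Q y + s * t * polar Q x y := by
  rw [QuadraticMap.map_add Q, QuadraticMap.map_smul, QuadraticMap.map_smul, polar_smul_left,
    polar_smul_right]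
  simp only [smul_eq_mul]
  ring

lemma exists_mem_Icc_map_eq_zero (Q : QuadraticForm ℝ E) {x y : E} (hx : Q x ≤ 0)
    (hy : 0 ≤ Q y) : ∃ t ∈ Icc (0 : ℝ) 1, Q ((1 - t) • x + t • y) = 0 := by
  have hcont : ContinuousOn (fun t : ℝ => Q ((1 - t) • x + t • y)) (Icc 0 1) := by
    simp only [map_smul_add_smul]
    fun_prop
  simpa using intermediate_value_Icc zero_le_one hcont ⟨by simpa using hx, by simpa using hy⟩

variable {F Q : QuadraticForm ℝ E}

lemma exists_mem_Icc_map_neg (hFQ : ∀ z ≠ 0, Q z = 0 → F z < 0) {x y : E} (hx : Q x < 0)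
    (hy : 0 < Q y) : ∃ t ∈ Icc (0 : ℝ) 1, F ((1 - t) • x + t • y) < 0 := by
  obtain ⟨t, ht, hQt⟩ := Q.exists_mem_Icc_map_eq_zero hx.le hy.le
  refine ⟨t, ht, hFQ _ (fun h0 => ?_) hQt⟩
  have h : Q ((1 - t) • x) = Q (-(t • y)) := by rw [eq_neg_of_add_eq_zero_left h0]
  rw [QuadraticMap.map_neg, QuadraticMap.map_smul, QuadraticMap.map_smul, smul_eq_mul,
    smul_eq_mul] at h
  have h1 : (1 - t) * (1 - t) = 0 := by nlinarith [mul_self_nonneg (1 - t), mul_self_nonneg t]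
  have h2 : t * t = 0 := by nlinarith [mul_self_nonneg (1 - t), mul_self_nonneg t]
  nlinarith

lemma map_lt_zero_or_map_lt_zero (hFQ : ∀ z ≠ 0, Q z = 0 → F z < 0) {x y : E} (hx₀ : x ≠ 0)
    (hy₀ : y ≠ 0) (hx : Q x ≤ 0) (hy : 0 ≤ Q y) : F x < 0 ∨ F y < 0 := by
  rcases hx.lt_or_eq with hx | hx
  swap; · exact .inl (hFQ x hx₀ hx)
  rcases hy.lt_or_eq with hy | hy
  swap; · exact .inr (hFQ y hy₀ hy.symm)
  by_contra! h
  obtain ⟨s, hs, hFs⟩ := exists_mem_Icc_map_neg hFQ hx hy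
  obtain ⟨t, ht, hFt⟩ := exists_mem_Icc_map_neg hFQ (x := -x) (by rwa [QuadraticMap.map_neg]) hy
  rw [map_smul_add_smul] at hFs hFt
  rw [QuadraticMap.map_neg, polar_neg_left] at hFt
  have hs' : 0 ≤ (1 - s) * s := mul_nonneg (sub_nonneg.2 hs.2) hs.1
  have ht' : 0 ≤ (1 - t) * t := mul_nonneg (sub_nonneg.2 ht.2) ht.1
  rcases le_total 0 (polar F x y) with hp | hp
  · nlinarith [mul_nonneg hs' hp, mul_nonneg (sq_nonneg (1 - s)) h.1, mul_nonneg (sq_nonneg s) h.2]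
  · nlinarith [mul_nonpos_of_nonneg_of_nonpos ht' hp, mul_nonneg (sq_nonneg (1 - t)) h.1,
      mul_nonneg (sq_nonneg t) h.2]

end

section

variable {E : Type*} [NormedAddCommGroup E] [NormedSpace ℝ E]

lemma neg_of_forall_mem_sphere_neg {F : QuadraticForm ℝ E}
    (hF : ∀ v ∈ Metric.sphere (0 : E) 1, F v < 0) {v : E} (hv : v ≠ 0) : F v < 0 := by
  have hnv : 0 < ‖v‖ := norm_pos_iff.2 hv
  have h := hF (‖v‖⁻¹ • v) (by
    rw [mem_sphere_zero_iff_norm, norm_smul, norm_inv, norm_norm, inv_mul_cancel₀ hnv.ne'])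
  rw [QuadraticMap.map_smul, smul_eq_mul] at h
  exact neg_of_mul_neg_right h (by positivity)

variable [FiniteDimensional ℝ E]

@[fun_prop]
theorem continuous_of_finiteDimensional (Q : QuadraticForm ℝ E) : Continuous Q := by
  let B : E →L[ℝ] E →L[ℝ] ℝ := LinearMap.toContinuousLinearMap
    (LinearMap.toContinuousLinearMap.toLinearMap ∘ₗ QuadraticMap.associated Q)
  have hB : ⇑Q = fun x => B x x := funext fun x => (associated_eq_self_apply ℝ Q x).symm
  exact hB ▸ B.continuous.clm_apply continuous_id

lemma exists_pos_forall_mem_sphere_le (Q : QuadraticForm ℝ E) :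
    ∃ M > 0, ∀ v ∈ Metric.sphere (0 : E) 1, Q v ≤ M := by
  obtain ⟨M, hM⟩ := (isCompact_sphere (0 : E) 1).bddAbove_image
    Q.continuous_of_finiteDimensional.continuousOn
  exact ⟨max M 1, by positivity, fun v hv => (hM ⟨v, hv, rfl⟩).trans (le_max_left _ _)⟩

lemma exists_pos_forall_mem_sphere_le_neg {C : QuadraticForm ℝ E} (hC : ∀ v ≠ 0, C v < 0) :
    ∃ γ > 0, ∀ v ∈ Metric.sphere (0 : E) 1, C v ≤ -γ := by
  obtain ⟨γ, hγ, hγC⟩ := (isCompact_sphere (0 : E) 1).exists_forall_le' (f := fun v => -C v)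
    C.continuous_of_finiteDimensional.neg.continuousOn
    fun v hv => neg_pos.2 (hC v (ne_zero_of_mem_unit_sphere ⟨v, hv⟩))
  exact ⟨γ, hγ, fun v hv => le_neg.2 (hγC v hv)⟩

theorem exists_pos_forall_add_mul_add_inv_mul_neg (C P Q : QuadraticForm ℝ E)
    (h : ∀ v ≠ 0, C v < 0 ∧ 4 * P v * Q v < C v ^ 2) :
    ∃ ε > 0, ∀ v ≠ 0, C v + ε * P v + ε⁻¹ * Q v < 0 := by
  -- `F ε v = ε * (C v + ε * P v + ε⁻¹ * Q v)` and `G ε = ∂F/∂ε`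
  let F : ℝ → QuadraticForm ℝ E := fun ε => ε ^ 2 • P + ε • C + Q
  let G : ℝ → QuadraticForm ℝ E := fun ε => (2 * ε) • P + C
  have hF (ε : ℝ) (v : E) : F ε v = ε ^ 2 * P v + ε * C v + Q v := rfl
  have hG (ε : ℝ) (v : E) : G ε v = 2 * ε * P v + C v := rfl
  have hvertex (ε : ℝ) (hε : 0 < ε) (v : E) (hv : v ≠ 0) (hGv : G ε v = 0) : F ε v < 0 :=
    sq_mul_add_mul_add_neg_of_two_mul_mul_add_eq_zero hε (h v hv).1 (h v hv).2 hGv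
  have hFc : Continuous fun z : ℝ × E => F z.1 z.2 :=
    show Continuous fun z : ℝ × E => z.1 ^ 2 * P z.2 + z.1 * C z.2 + Q z.2 by fun_prop
  have hGc : Continuous fun z : ℝ × E => G z.1 z.2 :=
    show Continuous fun z : ℝ × E => 2 * z.1 * P z.2 + C z.2 by fun_prop
  obtain ⟨γ, hγ, hCγ⟩ := exists_pos_forall_mem_sphere_le_neg fun v hv => (h v hv).1
  obtain ⟨MP, hMP, hPM⟩ := P.exists_pos_forall_mem_sphere_le
  obtain ⟨MQ, hMQ, hQM⟩ := Q.exists_pos_forall_mem_sphere_le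
  obtain ⟨ε₁, hε₁, hsmall⟩ := exists_pos_two_mul_mul_add_neg hγ hMP
  obtain ⟨ε₂, hε₂, hlarge⟩ := exists_pos_sq_mul_add_mul_add_neg hγ hMQ
  obtain ⟨ε, hε, hneg⟩ := exists_pos_forall_mem_neg_of_isCompact (isCompact_sphere 0 1) hFc hGc
    (fun ε hε x hx y hy hFx hFy hGx hGy =>
      (map_lt_zero_or_map_lt_zero (hvertex ε hε) (ne_zero_of_mem_unit_sphere ⟨x, hx⟩)
        (ne_zero_of_mem_unit_sphere ⟨y, hy⟩) hGx hGy).elim hFx.not_gt hFy.not_gt)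
    ⟨ε₁, hε₁, fun v hv => hsmall _ _ (hPM v hv) (hCγ v hv)⟩
    ⟨ε₂, hε₂, fun v hv => hlarge _ _ _ (hQM v hv) (hCγ v hv)⟩
  refine ⟨ε, hε, fun v hv => ?_⟩
  have hFv : F ε v < 0 := neg_of_forall_mem_sphere_neg hneg hv
  have : C v + ε * P v + ε⁻¹ * Q v = ε⁻¹ * F ε v := by rw [hF]; field_simp; ring
  exact this ▸ mul_neg_of_pos_of_neg (inv_pos.2 hε) hFv

end

end QuadraticMap

namespace Matrix

variable {m n : Type*} [Fintype m] [Fintype n]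

lemma dotProduct_self_nonneg (v : n → ℝ) : 0 ≤ v ⬝ᵥ v :=
  Finset.sum_nonneg fun i _ => mul_self_nonneg (v i)

lemma dotProduct_mul_self_le (w y : n → ℝ) : (w ⬝ᵥ y) ^ 2 ≤ (w ⬝ᵥ w) * (y ⬝ᵥ y) := by
  simpa only [dotProduct, sq] using Finset.sum_mul_sq_le_sq_mul_sq Finset.univ w y

lemma dotProduct_mulVec_mul_transpose (A : Matrix n m ℝ) (v : n → ℝ) :
    v ⬝ᵥ (A * Aᵀ) *ᵥ v = (v ᵥ* A) ⬝ᵥ (v ᵥ* A) := by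
  rw [← mulVec_mulVec, dotProduct_mulVec, mulVec_transpose]

lemma dotProduct_mulVec_transpose_mul (A : Matrix m n ℝ) (v : n → ℝ) :
    v ⬝ᵥ (Aᵀ * A) *ᵥ v = (A *ᵥ v) ⬝ᵥ (A *ᵥ v) := by
  rw [← mulVec_mulVec, dotProduct_mulVec, vecMul_transpose]

lemma posSemidef_one_sub_transpose_mul_self_iff [DecidableEq n] (V : Matrix m n ℝ) :
    (1 - Vᵀ * V).PosSemidef ↔ ∀ y, (V *ᵥ y) ⬝ᵥ (V *ᵥ y) ≤ y ⬝ᵥ y := by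
  have hV : (1 - Vᵀ * V).IsHermitian := by
    simp [IsHermitian, transpose_sub, transpose_mul]
  simp only [posSemidef_iff_dotProduct_mulVec, hV, true_and, star_trivial, sub_mulVec,
    one_mulVec, dotProduct_sub, dotProduct_mulVec_transpose_mul, sub_nonneg]

lemma posDef_neg_iff {M : Matrix n n ℝ} (hM : M.IsSymm) :
    (-M).PosDef ↔ ∀ v ≠ 0, v ⬝ᵥ M *ᵥ v < 0 := by
  simp [posDef_iff_dotProduct_mulVec, hM, neg_mulVec]

lemma dotProduct_mulVec_add_transpose (M : Matrix n n ℝ) (v : n → ℝ) :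
    v ⬝ᵥ (M + Mᵀ) *ᵥ v = 2 * (v ⬝ᵥ M *ᵥ v) := by
  rw [add_mulVec, dotProduct_add, mulVec_transpose, dotProduct_comm v (v ᵥ* M),
    ← dotProduct_mulVec, two_mul]

lemma dotProduct_mulVec_add_mul_mul_add_transpose {k l : Type*} [Fintype k] [Fintype l]
    (X : Matrix n n ℝ) (U : Matrix n k ℝ) (V : Matrix k l ℝ) (W : Matrix l n ℝ) (v : n → ℝ) :
    v ⬝ᵥ (X + U * V * W + Wᵀ * Vᵀ * Uᵀ) *ᵥ v = v ⬝ᵥ X *ᵥ v + 2 * ((v ᵥ* U) ⬝ᵥ V *ᵥ W *ᵥ v) := by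
  rw [show Wᵀ * Vᵀ * Uᵀ = (U * V * W)ᵀ by simp [transpose_mul, Matrix.mul_assoc], add_assoc,
    add_mulVec, dotProduct_add, dotProduct_mulVec_add_transpose, ← mulVec_mulVec,
    ← mulVec_mulVec, dotProduct_mulVec v U]

lemma toQuadraticForm'_apply [DecidableEq n] (M : Matrix n n ℝ) (v : n → ℝ) :
    M.toQuadraticForm' v = v ⬝ᵥ M *ᵥ v := by
  simp [toQuadraticForm', toLinearMap₂'_apply']

lemma two_mul_dotProduct_le {ε : ℝ} (hε : 0 < ε) (u z : n → ℝ) :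
    2 * (u ⬝ᵥ z) ≤ ε * (u ⬝ᵥ u) + ε⁻¹ * (z ⬝ᵥ z) := by
  have h : ε * (ε * (u ⬝ᵥ u) + ε⁻¹ * (z ⬝ᵥ z) - 2 * (u ⬝ᵥ z)) = (ε • u - z) ⬝ᵥ (ε • u - z) := by
    simp only [sub_dotProduct, dotProduct_sub, smul_dotProduct, dotProduct_smul, smul_eq_mul,
      dotProduct_comm z u]
    field_simp
    ring
  linarith [nonneg_of_mul_nonneg_right (h ▸ dotProduct_self_nonneg _) hε]

lemma exists_contraction_dotProduct_mulVec_eq (u : m → ℝ) (w : n → ℝ) :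
    ∃ V : Matrix m n ℝ, (∀ y, (V *ᵥ y) ⬝ᵥ (V *ᵥ y) ≤ y ⬝ᵥ y) ∧
      u ⬝ᵥ V *ᵥ w = √((u ⬝ᵥ u) * (w ⬝ᵥ w)) := by
  set r := √((u ⬝ᵥ u) * (w ⬝ᵥ w))
  have hr : r ^ 2 = (u ⬝ᵥ u) * (w ⬝ᵥ w) :=
    Real.sq_sqrt (mul_nonneg (dotProduct_self_nonneg u) (dotProduct_self_nonneg w))
  have hVy (y : n → ℝ) : (r⁻¹ • vecMulVec u w) *ᵥ y = (r⁻¹ * (w ⬝ᵥ y)) • u := by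
    rw [smul_mulVec, vecMulVec_mulVec, op_smul_eq_smul, smul_smul]
  refine ⟨r⁻¹ • vecMulVec u w, fun y => ?_, ?_⟩
  · rw [hVy, smul_dotProduct, dotProduct_smul, smul_eq_mul, smul_eq_mul]
    calc r⁻¹ * (w ⬝ᵥ y) * (r⁻¹ * (w ⬝ᵥ y) * (u ⬝ᵥ u)) = r⁻¹ ^ 2 * (u ⬝ᵥ u) * (w ⬝ᵥ y) ^ 2 := by
          ring
      _ ≤ r⁻¹ ^ 2 * (u ⬝ᵥ u) * ((w ⬝ᵥ w) * (y ⬝ᵥ y)) := by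
          have := dotProduct_self_nonneg u
          gcongr
          exact dotProduct_mul_self_le w y
      _ = (r⁻¹ * r) ^ 2 * (y ⬝ᵥ y) := by rw [mul_pow, hr]; ring
      _ ≤ y ⬝ᵥ y := mul_le_of_le_one_left (dotProduct_self_nonneg y)
          (pow_le_one₀ (by positivity) inv_mul_le_one)
  · rw [hVy, dotProduct_smul, smul_eq_mul]
    calc r⁻¹ * (w ⬝ᵥ w) * (u ⬝ᵥ u) = (u ⬝ᵥ u) * (w ⬝ᵥ w) / r := by ring
      _ = r := Real.div_sqrt

end Matrix

theorem petersen_lemma {n p q : ℕ}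
    (X : Matrix (Fin n) (Fin n) ℝ) (hX : X.IsSymm)
    (U : Matrix (Fin n) (Fin p) ℝ) (W : Matrix (Fin q) (Fin n) ℝ) :
    (∀ V : Matrix (Fin p) (Fin q) ℝ, ((1 : Matrix (Fin q) (Fin q) ℝ) - Vᵀ * V).PosSemidef →
        (-(X + U * V * W + Wᵀ * Vᵀ * Uᵀ)).PosDef) ↔
      ∃ ε : ℝ, 0 < ε ∧ (-(X + ε • (U * Uᵀ) + ε⁻¹ • (Wᵀ * W))).PosDef := by
  have hsymm (V : Matrix (Fin p) (Fin q) ℝ) : (X + U * V * W + Wᵀ * Vᵀ * Uᵀ).IsSymm := by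
    simp [IsSymm, transpose_mul, hX.eq, Matrix.mul_assoc, add_right_comm]
  have hsymmε (ε : ℝ) : (X + ε • (U * Uᵀ) + ε⁻¹ • (Wᵀ * W)).IsSymm := by
    simp [IsSymm, transpose_mul, hX.eq]
  have hquad (ε : ℝ) (v : Fin n → ℝ) : v ⬝ᵥ (X + ε • (U * Uᵀ) + ε⁻¹ • (Wᵀ * W)) *ᵥ v =
      v ⬝ᵥ X *ᵥ v + ε * ((v ᵥ* U) ⬝ᵥ (v ᵥ* U)) + ε⁻¹ * ((W *ᵥ v) ⬝ᵥ (W *ᵥ v)) := by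
    simp only [add_mulVec, smul_mulVec, dotProduct_add, dotProduct_smul, smul_eq_mul,
      dotProduct_mulVec_mul_transpose, dotProduct_mulVec_transpose_mul]
  simp only [posSemidef_one_sub_transpose_mul_self_iff, posDef_neg_iff (hsymm _),
    posDef_neg_iff (hsymmε _), hquad, dotProduct_mulVec_add_mul_mul_add_transpose]
  constructor
  · intro h
    obtain ⟨ε, hε, hneg⟩ := QuadraticMap.exists_pos_forall_add_mul_add_inv_mul_neg
      X.toQuadraticForm' (U * Uᵀ).toQuadraticForm' (Wᵀ * W).toQuadraticForm' fun v hv => by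
        obtain ⟨V, hV, hVuw⟩ := exists_contraction_dotProduct_mulVec_eq (v ᵥ* U) (W *ᵥ v)
        simp only [toQuadraticForm'_apply, dotProduct_mulVec_mul_transpose,
          dotProduct_mulVec_transpose_mul]
        exact neg_and_four_mul_mul_lt_sq
          (mul_nonneg (dotProduct_self_nonneg _) (dotProduct_self_nonneg _))
          (hVuw ▸ h V hV v hv)
    refine ⟨ε, hε, fun v hv => ?_⟩
    simpa only [toQuadraticForm'_apply, dotProduct_mulVec_mul_transpose,
      dotProduct_mulVec_transpose_mul] using hneg v hv
  · rintro ⟨ε, hε, hneg⟩ V hV v hv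
    have hmono := mul_le_mul_of_nonneg_left (hV (W *ᵥ v)) (inv_pos.2 hε).le
    linarith [two_mul_dotProduct_le hε (v ᵥ* U) (V *ᵥ W *ᵥ v), hneg v hv]
end

section
/- For real matrices R1 ∈ R^{n×m}, R2 ∈ R^{m×n}, any diagonal matrix Σ ∈ R^{m×m} with |Σ| ≤ U entrywise for a positive semidefinite diagonal matrix U, and any scalar ε > 0, the matrix inequality R1 Σ R2 + R2^T Σ^T R1^T ≤ ε R1 U R1^T + ε^{-1} R2^T U R2 holds in the Loewner order. -/
/-!
With `A = ε R1` and `B = R2ᵀ`, `ε` times the difference of the two sides is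
`A U Aᵀ + B U Bᵀ - (A Σ Bᵀ + B Σ Aᵀ)`, and twice this equals the sum of squares
`(A - B)(U + Σ)(A - B)ᵀ + (A + B)(U - Σ)(A + B)ᵀ`, whose diagonal middle factors
`U ± Σ` are nonnegative because `|σᵢ| ≤ uᵢ`.
-/

open Matrix

variable {ι κ : Type*} [Fintype κ] [DecidableEq κ]

lemma posSemidef_mul_diagonal_mul_transpose [Fintype ι] {d : κ → ℝ} (hd : ∀ i, 0 ≤ d i)
    (A : Matrix ι κ ℝ) : (A * diagonal d * Aᵀ).PosSemidef := by
  simpa only [conjTranspose_eq_transpose_of_trivial] using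
    (posSemidef_diagonal_iff.mpr hd).mul_mul_conjTranspose_same A

lemma two_smul_sub_cross_eq_sum_squares (A B : Matrix ι κ ℝ) (σ u : κ → ℝ) :
    (2 : ℝ) • (A * diagonal u * Aᵀ + B * diagonal u * Bᵀ
        - (A * diagonal σ * Bᵀ + B * diagonal σ * Aᵀ)) =
      (A - B) * diagonal (u + σ) * (A - B)ᵀ + (A + B) * diagonal (u - σ) * (A + B)ᵀ := by
  rw [show diagonal (u + σ) = diagonal u + diagonal σ from (diagonal_add u σ).symm,
    show diagonal (u - σ) = diagonal u - diagonal σ from (diagonal_sub u σ).symm]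
  simp only [transpose_add, transpose_sub, Matrix.add_mul, Matrix.sub_mul, Matrix.mul_add,
    Matrix.mul_sub, two_smul]
  abel

lemma posSemidef_sub_cross_of_abs_le [Fintype ι] (A B : Matrix ι κ ℝ) {σ u : κ → ℝ}
    (hσ : ∀ i, |σ i| ≤ u i) :
    (A * diagonal u * Aᵀ + B * diagonal u * Bᵀ
        - (A * diagonal σ * Bᵀ + B * diagonal σ * Aᵀ)).PosSemidef := by
  have hplus : ∀ i, 0 ≤ (u + σ) i := fun i => by
    simp only [Pi.add_apply]; linarith [neg_abs_le (σ i), hσ i]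
  have hminus : ∀ i, 0 ≤ (u - σ) i := fun i => by
    simp only [Pi.sub_apply]; linarith [le_abs_self (σ i), hσ i]
  have hsum := ((posSemidef_mul_diagonal_mul_transpose hplus (A - B)).add
    (posSemidef_mul_diagonal_mul_transpose hminus (A + B))).smul (a := (2 : ℝ)⁻¹) (by norm_num)
  rwa [← two_smul_sub_cross_eq_sum_squares, smul_smul, inv_mul_cancel₀ two_ne_zero,
    one_smul] at hsum

theorem diag_uncertainty_bound_general {n m : ℕ}
    (R1 : Matrix (Fin n) (Fin m) ℝ) (R2 : Matrix (Fin m) (Fin n) ℝ)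
    (σ u : Fin m → ℝ) (hσ : ∀ i, |σ i| ≤ u i)
    (ε : ℝ) (hε : 0 < ε) :
    (ε • (R1 * Matrix.diagonal u * R1ᵀ) + ε⁻¹ • (R2ᵀ * Matrix.diagonal u * R2)
      - (R1 * Matrix.diagonal σ * R2 + R2ᵀ * (Matrix.diagonal σ)ᵀ * R1ᵀ)).PosSemidef := by
  have h := (posSemidef_sub_cross_of_abs_le (ε • R1) R2ᵀ hσ).smul (inv_nonneg.mpr hε.le)
  convert h using 1
  simp only [transpose_transpose, diagonal_transpose, transpose_smul, Matrix.smul_mul,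
    Matrix.mul_smul, smul_smul, smul_sub, smul_add, inv_mul_cancel₀ hε.ne',
    inv_mul_cancel_left₀ hε.ne', one_smul]

theorem diag_uncertainty_bound {n m : ℕ}
    (R1 : Matrix (Fin n) (Fin m) ℝ) (R2 : Matrix (Fin m) (Fin n) ℝ)
    (σ u : Fin m → ℝ) (hu : ∀ i, 0 ≤ u i) (hσ : ∀ i, |σ i| ≤ u i)
    (ε : ℝ) (hε : 0 < ε) :
    (ε • (R1 * Matrix.diagonal u * R1ᵀ) + ε⁻¹ • (R2ᵀ * Matrix.diagonal u * R2)
      - (R1 * Matrix.diagonal σ * R2 + R2ᵀ * (Matrix.diagonal σ)ᵀ * R1ᵀ)).PosSemidef :=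
  diag_uncertainty_bound_general R1 R2 σ u hσ ε hε
end

section
/- Let 0 < α < 1, μ ≥ 1, N0 ≥ 0 and τa > ln μ / (−ln α). Then for any integers D ≥ z ≥ 0 and any χ satisfying χ ≤ N0 + (D − z)/τa, the bound μ^χ α^{D−z} ≤ μ^{N0} e^{−((−ln α) − (ln μ)/τa)(D − z)} holds, and the exponent coefficient (−ln α) − (ln μ)/τa is strictly positive. -/
open Real

theorem sub_div_pos_of_div_lt {L M τ : ℝ} (hL : 0 < L) (hM : 0 ≤ M) (h : M / L < τ) :
    0 < L - M / τ := by
  have hτ : 0 < τ := (div_nonneg hM hL.le).trans_lt h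
  exact sub_pos.2 ((div_lt_comm₀ hτ hL).2 h)

theorem pow_mul_pow_le_rpow_mul_exp {α μ τ N : ℝ} (hα : 0 < α) (hμ : 1 ≤ μ) {χ n : ℕ}
    (hχ : (χ : ℝ) ≤ N + n / τ) :
    μ ^ χ * α ^ n ≤ μ ^ N * exp (-(-log α - log μ / τ) * n) := by
  have hμ0 : 0 < μ := one_pos.trans_le hμ
  have hjumps : log μ * χ ≤ log μ * (N + n / τ) :=
    mul_le_mul_of_nonneg_left hχ (log_nonneg hμ)
  calc μ ^ χ * α ^ n = exp (log μ * χ + log α * n) := by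
        rw [exp_add, ← rpow_natCast, ← rpow_natCast, rpow_def_of_pos hμ0, rpow_def_of_pos hα]
    _ ≤ exp (log μ * N + -(-log α - log μ / τ) * n) := by
        rw [exp_le_exp]
        linear_combination hjumps
    _ = μ ^ N * exp (-(-log α - log μ / τ) * n) := by
        rw [exp_add, rpow_def_of_pos hμ0]

theorem average_dwell_time_bound_general
    (α μ τa N0 : ℝ) (hα0 : 0 < α) (hα1 : α < 1) (hμ : 1 ≤ μ)
    (hτ : τa > Real.log μ / (-Real.log α))
    (D z : ℕ) (hDz : z ≤ D) (χ : ℕ)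
    (hχ : (χ : ℝ) ≤ N0 + ((D : ℝ) - (z : ℝ)) / τa) :
    μ ^ χ * α ^ (D - z) ≤
      μ ^ N0 * Real.exp (-((-Real.log α) - Real.log μ / τa) * ((D : ℝ) - (z : ℝ))) ∧
    0 < (-Real.log α) - Real.log μ / τa := by
  have hdecay : 0 < -log α := neg_pos.2 (log_neg hα0 hα1)
  refine ⟨?_, sub_div_pos_of_div_lt hdecay (log_nonneg hμ) hτ⟩
  rw [← Nat.cast_sub hDz] at hχ ⊢
  exact pow_mul_pow_le_rpow_mul_exp hα0 hμ hχ

theorem average_dwell_time_bound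
    (α μ τa N0 : ℝ) (hα0 : 0 < α) (hα1 : α < 1) (hμ : 1 ≤ μ) (hN0 : 0 ≤ N0)
    (hτ : τa > Real.log μ / (-Real.log α))
    (D z : ℕ) (hDz : z ≤ D) (χ : ℕ)
    (hχ : (χ : ℝ) ≤ N0 + ((D : ℝ) - (z : ℝ)) / τa) :
    μ ^ χ * α ^ (D - z) ≤
      μ ^ N0 * Real.exp (-((-Real.log α) - Real.log μ / τa) * ((D : ℝ) - (z : ℝ))) ∧
    0 < (-Real.log α) - Real.log μ / τa :=
  average_dwell_time_bound_general α μ τa N0 hα0 hα1 hμ hτ D z hDz χ hχ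
end
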